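/- Let (G, M, I) be a finite formal context and let (g, m) ∈ I. Every set A with g ∈ A ⊆ g′′ satisfies A ⊆ m′ and A′ = g′; hence |{A ⊆ m′ | A′ = g′}| ≥ 2^{|g′′| − 1}, and the stability index of the OA-bicluster (m′, g′) satisfies the lower bound σ(m′, g′) ≥ 2^{|g′′ \ {g}| − |m′|}. -/

import Mathlib

/-!
Since `m ∈ g′`, every object of `g′′` has the attribute `m`, so `g′′ ⊆ m′`. If `g ∈ A ⊆ g′′`,
antitonicity of `′` squeezes `A′` between `g′′′ = g′` and `g′`. Hence `T ↦ insert g T` embeds the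
subsets of `g′′ \ {g}` into `{A ⊆ m′ | A′ = g′}`.
-/

open Finset

namespace FiniteContext

variable {G M : Type*} [Fintype G] [Fintype M] [DecidableEq G] [DecidableEq M]
  (I : Finset (G × M))

def intent (A : Finset G) : Finset M := univ.filter (fun n : M ↦ ∀ x ∈ A, (x, n) ∈ I)

def extent (B : Finset M) : Finset G := univ.filter (fun x : G ↦ ∀ n ∈ B, (x, n) ∈ I)

theorem coe_intent (A : Finset G) :
    (intent I A : Set M) = upperPolar (fun x n ↦ (x, n) ∈ I) A := by
  ext n
  simp [intent, mem_upperPolar_iff]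

theorem coe_extent (B : Finset M) :
    (extent I B : Set G) = lowerPolar (fun x n ↦ (x, n) ∈ I) B := by
  ext x
  simp [extent, mem_lowerPolar_iff]

theorem intent_singleton (g : G) : intent I {g} = univ.filter (fun n : M ↦ (g, n) ∈ I) := by
  simp [intent]

theorem extent_singleton (m : M) : extent I {m} = univ.filter (fun x : G ↦ (x, m) ∈ I) := by
  simp [extent]

variable {I}

theorem subset_extent_intent (A : Finset G) : A ⊆ extent I (intent I A) := by
  rw [← coe_subset, coe_extent, coe_intent]
  exact subset_lowerPolar_upperPolar _ _

theorem extent_intent_subset_extent_singleton {A : Finset G} {m : M} (hm : m ∈ intent I A) :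
    extent I (intent I A) ⊆ extent I {m} := by
  rw [← coe_subset, coe_extent, coe_extent]
  exact lowerPolar_anti _ (by simpa using hm)

theorem intent_eq_of_subset_of_subset_extent_intent {A₀ A : Finset G} (h₀ : A₀ ⊆ A)
    (h : A ⊆ extent I (intent I A₀)) : intent I A = intent I A₀ := by
  rw [← coe_subset, coe_extent, coe_intent] at h
  rw [← coe_inj, coe_intent, coe_intent]
  refine le_antisymm (upperPolar_anti _ (coe_subset.2 h₀)) ?_
  simpa using upperPolar_anti (fun x n ↦ (x, n) ∈ I) h

end FiniteContext

theorem Finset.two_pow_card_sub_one_le_card_filter_powerset {α : Type*} [DecidableEq α]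
    {s t : Finset α} {p : Finset α → Prop} [DecidablePred p] {a : α} (ha : a ∈ s)
    (h : ∀ A, a ∈ A → A ⊆ s → A ⊆ t ∧ p A) :
    2 ^ (#s - 1) ≤ #{A ∈ t.powerset | p A} := by
  have hmaps : Set.MapsTo (insert a) ((s.erase a).powerset : Set (Finset α))
      ({A ∈ t.powerset | p A} : Finset (Finset α)) := by
    intro T hT
    simp only [coe_powerset, Set.mem_preimage, Set.mem_powerset_iff, coe_subset] at hT
    simpa using h _ (mem_insert_self a T) (insert_subset ha (hT.trans (erase_subset a s)))
  have hinj : Set.InjOn (insert a) ((s.erase a).powerset : Set (Finset α)) := by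
    intro T₁ h₁ T₂ h₂ heq
    simp only [coe_powerset, Set.mem_preimage, Set.mem_powerset_iff, coe_subset] at h₁ h₂
    rw [← erase_insert (fun h ↦ notMem_erase a s (h₁ h)), heq,
      erase_insert (fun h ↦ notMem_erase a s (h₂ h))]
  calc 2 ^ (#s - 1) = #(s.erase a).powerset := by rw [card_powerset, card_erase_of_mem ha]
    _ ≤ _ := card_le_card_of_injOn _ hmaps hinj

theorem two_zpow_sub_le_div_two_pow {k n N : ℕ} (h : 2 ^ k ≤ N) :
    (2 : ℚ) ^ ((k : ℤ) - n) ≤ N / 2 ^ n := by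
  rw [zpow_sub₀ two_ne_zero, zpow_natCast, zpow_natCast]
  gcongr
  exact_mod_cast h

open FiniteContext in
/-- For a finite formal context `(G, M, I)` and `(g, m) ∈ I`: every set `A`
with `g ∈ A ⊆ g′′` satisfies `A ⊆ m′` and `A′ = g′`; hence
`|{A ⊆ m′ | A′ = g′}| ≥ 2^{|g′′| − 1}` and the stability index of the OA-bicluster
`(m′, g′)` satisfies `σ(m′, g′) ≥ 2^{|g′′ \ {g}| − |m′|}`. -/
theorem oa_bicluster_stability_lower_bound {G M : Type*} [Fintype G] [Fintype M]
    [DecidableEq G] [DecidableEq M]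
    (I : Finset (G × M)) (g : G) (m : M) (hgm : (g, m) ∈ I)
    (mP : Finset G) (gP : Finset M) (gPP : Finset G)
    (hmP : mP = Finset.univ.filter (fun x : G => (x, m) ∈ I))
    (hgP : gP = Finset.univ.filter (fun n : M => (g, n) ∈ I))
    (hgPP : gPP = Finset.univ.filter (fun x : G => ∀ n ∈ gP, (x, n) ∈ I))
    (σ : ℚ)
    (hσ : σ = ((mP.powerset.filter
        (fun A : Finset G =>
          Finset.univ.filter (fun n : M => ∀ x ∈ A, (x, n) ∈ I) = gP)).card : ℚ) /
      2 ^ mP.card) :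
    (∀ A : Finset G, g ∈ A → A ⊆ gPP →
      A ⊆ mP ∧ Finset.univ.filter (fun n : M => ∀ x ∈ A, (x, n) ∈ I) = gP) ∧
    2 ^ (gPP.card - 1) ≤ (mP.powerset.filter
        (fun A : Finset G =>
          Finset.univ.filter (fun n : M => ∀ x ∈ A, (x, n) ∈ I) = gP)).card ∧
    (2 : ℚ) ^ (((gPP.erase g).card : ℤ) - (mP.card : ℤ)) ≤ σ := by
  rw [← extent_singleton] at hmP
  rw [← intent_singleton] at hgP
  subst hmP hgP hgPP hσ
  have hm : m ∈ intent I {g} := by simpa [intent] using hgm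
  have hg : g ∈ extent I (intent I {g}) := subset_extent_intent {g} (mem_singleton_self g)
  have key : ∀ A : Finset G, g ∈ A → A ⊆ extent I (intent I {g}) →
      A ⊆ extent I {m} ∧ intent I A = intent I {g} :=
    fun A hgA hA ↦ ⟨hA.trans (extent_intent_subset_extent_singleton hm),
      intent_eq_of_subset_of_subset_extent_intent (singleton_subset_iff.2 hgA) hA⟩
  have hcount := two_pow_card_sub_one_le_card_filter_powerset hg key
  refine ⟨key, hcount, ?_⟩
  rw [← card_erase_of_mem hg] at hcount
  exact two_zpow_sub_le_div_two_pow hcount
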